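/- arXiv:1501.02602 — 8 statements merged into one kernel-verified Lean document; each statement's English description precedes it below -/
import Mathlib

section
/- Every infinite virtually cyclic group is of type I or of type II; that is, every infinite group containing a cyclic subgroup of finite index admits a surjective group homomorphism onto the infinite cyclic group ℤ or a surjective group homomorphism onto the infinite dihedral group D∞. -/
/-- A group is virtually cyclic if it contains a cyclic subgroup of finite index. -/
def VirtuallyCyclic (G : Type*) [Group G] : Prop :=
  ∃ H : Subgroup G, IsCyclic ↥H ∧ H.FiniteIndex

/-- An infinite virtually cyclic group is of type I if it admits a surjective
homomorphism onto the infinite cyclic group ℤ. -/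
def IsTypeI (G : Type*) [Group G] : Prop :=
  ∃ f : G →* Multiplicative ℤ, Function.Surjective f

/-- An infinite virtually cyclic group is of type II if it admits a surjective
homomorphism onto the infinite dihedral group D∞. -/
def IsTypeII (G : Type*) [Group G] : Prop :=
  ∃ f : G →* DihedralGroup 0, Function.Surjective f

/-!
The normal core of a cyclic subgroup of finite index is an infinite cyclic normal subgroup `⟨g⟩`
of finite index. Conjugation acts on `⟨g⟩` by automorphisms, so it sends `g` to `g` or `g⁻¹`, and
the centralizer `W` of `g` has index at most two. As `g` is central in `W`, the transfer
`τ : W → ⟨g⟩ ≅ ℤ` sends `g` to `g ^ [W : ⟨g⟩] ≠ 1`. If `W` is the whole group, `τ` is a nonzero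
homomorphism to `ℤ`. Otherwise, for `t` inverting `g`, `w ↦ τ w - τ (t w t⁻¹)` is a nonzero
homomorphism `W → ℤ` which changes sign under conjugation by `t`; divided by the generator of its
image, it extends to a surjection onto `D∞` sending `t` to a reflection.
-/

open Subgroup Function DihedralGroup Multiplicative

section

variable {G : Type*} [Group G]

lemma Subgroup.infinite_of_finiteIndex [Infinite G] (H : Subgroup G) [H.FiniteIndex] :
    Infinite H :=
  not_finite_iff_infinite.1 fun _ =>
    have := H.finite_iff_finite_and_finiteIndex.2 ⟨‹_›, ‹_›⟩
    not_finite G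

lemma VirtuallyCyclic.exists_zpowers_normal [Infinite G] (hG : VirtuallyCyclic G) :
    ∃ g : G, (zpowers g).Normal ∧ (zpowers g).FiniteIndex ∧ ¬IsOfFinOrder g := by
  obtain ⟨H, hH, hHfin⟩ := hG
  obtain ⟨g, hg⟩ := H.normalCore.isCyclic_iff_exists_zpowers_eq_top.1
    (isCyclic_of_le H.normalCore_le)
  have : Infinite (zpowers g) := hg ▸ H.normalCore.infinite_of_finiteIndex
  exact ⟨g, hg ▸ H.normalCore_normal, hg ▸ inferInstance,
    infinite_zpowers.1 (Set.infinite_coe_iff.1 this)⟩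

lemma conj_eq_or_eq_inv_of_normal_zpowers {g : G} [hN : (zpowers g).Normal]
    (hg : ¬IsOfFinOrder g) (v : G) : v * g * v⁻¹ = g ∨ v * g * v⁻¹ = g⁻¹ := by
  obtain ⟨a, ha⟩ := mem_zpowers_iff.1 (hN.conj_mem g (mem_zpowers g) v)
  obtain ⟨b, hb⟩ := mem_zpowers_iff.1 (hN.conj_mem g (mem_zpowers g) v⁻¹)
  have hab : a * b = 1 := injective_zpow_iff_not_isOfFinOrder.2 hg <| by
    calc g ^ (a * b) = v * g ^ b * v⁻¹ := by rw [zpow_mul, ha, conj_zpow]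
      _ = g ^ (1 : ℤ) := by rw [hb]; group
  rcases Int.eq_one_or_neg_one_of_mul_eq_one' hab with ⟨rfl, -⟩ | ⟨rfl, -⟩
  · exact .inl (by simpa using ha.symm)
  · exact .inr (by simpa using ha.symm)

lemma mem_centralizer_singleton_iff_conj {g v : G} :
    v ∈ centralizer {g} ↔ v * g * v⁻¹ = g := by
  rw [mem_centralizer_singleton_iff, mul_inv_eq_iff_eq_mul]

lemma index_centralizer_eq_two {g t : G} (hG : ∀ v : G, v * g * v⁻¹ = g ∨ v * g * v⁻¹ = g⁻¹)
    (ht : t * g * t⁻¹ ≠ g) : (centralizer {g}).index = 2 := by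
  have htg : t * g * t⁻¹ = g⁻¹ := (hG t).resolve_left ht
  have hne : g⁻¹ ≠ g := htg ▸ ht
  have hconj : ∀ b, b * t * g * (b * t)⁻¹ = (b * g * b⁻¹)⁻¹ := fun b => by
    rw [show b * t * g * (b * t)⁻¹ = b * (t * g * t⁻¹) * b⁻¹ by group, htg]; group
  refine index_eq_two_iff.2 ⟨t, fun b => ?_⟩
  simp only [mem_centralizer_singleton_iff_conj, hconj]
  rcases hG b with h | h <;> rw [h] <;> simp [hne]

lemma exists_monoidHom_int_ne_one_of_mem_center {g : G} (hc : g ∈ center G)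
    [(zpowers g).FiniteIndex] (hg : ¬IsOfFinOrder g) :
    ∃ τ : G →* Multiplicative ℤ, τ g ≠ 1 := by
  have : Infinite (zpowers g) := (infinite_zpowers.2 hg).to_subtype
  let e : zpowers g →* Multiplicative ℤ := intCyclicMulEquiv.symm.toMonoidHom
  have hcomm (k : ℕ) (g₀ : G) (_ : g₀⁻¹ * g ^ k * g₀ ∈ zpowers g) :
      g₀⁻¹ * g ^ k * g₀ = g ^ k := by
    rw [mul_assoc, ← mem_center_iff.1 (pow_mem hc k) g₀, inv_mul_cancel_left]
  refine ⟨e.transfer, fun h => hg (isOfFinOrder_iff_pow_eq_one.2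
    ⟨(zpowers g).index, Nat.pos_of_ne_zero FiniteIndex.index_ne_zero, ?_⟩)⟩
  rw [MonoidHom.transfer_eq_pow e g hcomm] at h
  simpa using congrArg Subtype.val (intCyclicMulEquiv.symm.injective (h.trans (map_one _).symm))

lemma exists_monoidHom_centralizer_int_ne_one {g : G} [(zpowers g).FiniteIndex]
    (hg : ¬IsOfFinOrder g) :
    ∃ τ : centralizer {g} →* Multiplicative ℤ, τ ⟨g, mem_centralizer_singleton_iff.2 rfl⟩ ≠ 1 := by
  set g' : centralizer {g} := ⟨g, mem_centralizer_singleton_iff.2 rfl⟩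
  have hc : g' ∈ center (centralizer {g}) :=
    mem_center_iff.2 fun w => Subtype.ext (mem_centralizer_singleton_iff.1 w.2)
  have : (zpowers g').FiniteIndex := by
    have h : (zpowers g).index = (zpowers g').index * (centralizer {g}).index := by
      rw [← index_map_subtype, MonoidHom.map_zpowers]; rfl
    exact ⟨left_ne_zero_of_mul (h ▸ FiniteIndex.index_ne_zero)⟩
  exact exists_monoidHom_int_ne_one_of_mem_center hc fun h =>
    hg ((centralizer {g}).subtype.isOfFinOrder h)

lemma exists_surjective_factor_of_ne_one (f : G →* Multiplicative ℤ) (hf : f ≠ 1) :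
    ∃ f' : G →* Multiplicative ℤ, Surjective f' ∧
      ∃ b : ℤ, b ≠ 0 ∧ ∀ x, toAdd (f x) = toAdd (f' x) * b := by
  obtain ⟨x, hx⟩ := DFunLike.ne_iff.1 hf
  have : Infinite f.range := Set.Infinite.to_subtype <|
    (infinite_zpowers.2 (not_isOfFinOrder_of_isMulTorsionFree hx)).mono (zpowers_le.2 ⟨x, rfl⟩)
  let e : Multiplicative ℤ ≃* f.range := intCyclicMulEquiv
  let ψ : Multiplicative ℤ →* Multiplicative ℤ := f.range.subtype.comp e.toMonoidHom
  refine ⟨e.symm.toMonoidHom.comp f.rangeRestrict,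
    e.symm.surjective.comp f.rangeRestrict_surjective, toAdd (ψ (ofAdd 1)), ?_, fun x => ?_⟩
  · have hψ : Injective ψ := f.range.subtype_injective.comp e.injective
    simpa using hψ.ne (show ofAdd (1 : ℤ) ≠ 1 by decide)
  · have : f x = ψ (e.symm (f.rangeRestrict x)) := by simp [ψ]
    rw [this, ψ.apply_mint]
    simp

open Classical in
noncomputable def dihedralOfIndexTwo (W : Subgroup G) (t : G) (a : G → ℤ) (v : G) :
    DihedralGroup 0 :=
  if v ∈ W then r (Int.cast (a v)) else sr (Int.cast (a (t⁻¹ * v)))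

lemma dihedralOfIndexTwo_mul {W : Subgroup G} (hW : W.index = 2) {t : G} (ht : t ∉ W)
    {a : G → ℤ} (ha_mul : ∀ u ∈ W, ∀ v ∈ W, a (u * v) = a u + a v)
    (ha_conj : ∀ w ∈ W, a (t * w * t⁻¹) = -a w) (u v : G) :
    dihedralOfIndexTwo W t a (u * v) = dihedralOfIndexTwo W t a u * dihedralOfIndexTwo W t a v := by
  have hmem {u v : G} : u * v ∈ W ↔ (u ∈ W ↔ v ∈ W) := mul_mem_iff_of_index_two hW
  have hinv : t⁻¹ ∉ W := inv_mem_iff.not.2 ht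
  have ha_sq : a (t * t) = 0 := by
    have h := ha_conj (t * t) (by simp [hmem])
    rw [show t * (t * t) * t⁻¹ = t * t by group] at h
    omega
  by_cases hu : u ∈ W <;> by_cases hv : v ∈ W <;>
    simp only [dihedralOfIndexTwo, hu, hv, hmem, if_true, if_false, iff_true, iff_false,
      iff_self, not_true, r_mul_r, r_mul_sr, sr_mul_r, sr_mul_sr]
  · rw [ha_mul u hu v hv, Int.cast_add]
  · have h := ha_conj (t⁻¹ * u * t) (by simp [hmem, hu, ht, hinv])
    rw [show t * (t⁻¹ * u * t) * t⁻¹ = u by group] at h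
    rw [show t⁻¹ * (u * v) = (t⁻¹ * u * t) * (t⁻¹ * v) by group,
      ha_mul _ (by simp [hmem, hu, ht, hinv]) _ (by simp [hmem, hv, hinv])]
    rw [h]; push_cast; ring
  · rw [← mul_assoc, ha_mul _ (by simp [hmem, hu, hinv]) v hv, Int.cast_add]
  · have hu' : t⁻¹ * u ∈ W := by simp [hmem, hu, hinv]
    rw [show u * v = t * (t⁻¹ * u) * t⁻¹ * (t * t) * (t⁻¹ * v) by group,
      ha_mul _ (by simp [hmem, hu, ht]) _ (by simp [hmem, hv, hinv]),
      ha_mul _ (by simp [hmem, hu, hinv]) _ (by simp [hmem]), ha_conj _ hu', ha_sq]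
    push_cast; ring

lemma exists_surjective_dihedral_of_surjective {W : Subgroup G} (hW : W.index = 2) {t : G}
    (ht : t ∉ W) (A : W →* Multiplicative ℤ) (hA : Surjective A)
    (hAt : ∀ w w' : W, (w' : G) = t * w * t⁻¹ → A w' = (A w)⁻¹) :
    ∃ Φ : G →* DihedralGroup 0, Surjective Φ := by
  classical
  let a (v : G) : ℤ := if h : v ∈ W then toAdd (A ⟨v, h⟩) else 0
  have ha_mul : ∀ u ∈ W, ∀ v ∈ W, a (u * v) = a u + a v := fun u hu v hv => by
    simp only [a, dif_pos hu, dif_pos hv, dif_pos (mul_mem hu hv)]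
    exact congrArg toAdd (map_mul A ⟨u, hu⟩ ⟨v, hv⟩)
  have ha_conj : ∀ w ∈ W, a (t * w * t⁻¹) = -a w := fun w hw => by
    have hw' : t * w * t⁻¹ ∈ W := (normal_of_index_eq_two hW).conj_mem w hw t
    simp only [a, dif_pos hw, dif_pos hw']
    exact congrArg toAdd (hAt ⟨w, hw⟩ ⟨_, hw'⟩ rfl)
  refine ⟨MonoidHom.mk' (dihedralOfIndexTwo W t a) (dihedralOfIndexTwo_mul hW ht ha_mul ha_conj),
    ?_⟩
  rintro (i | i) <;> obtain ⟨j, rfl⟩ := ZMod.intCast_surjective i <;> obtain ⟨w, hw⟩ := hA (ofAdd j)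
  · exact ⟨w, by simp [dihedralOfIndexTwo, a, hw]⟩
  · exact ⟨t * w, by simp [dihedralOfIndexTwo, a, hw, mul_mem_iff_of_index_two hW, ht]⟩

lemma exists_surjective_dihedral {W : Subgroup G} (hW : W.index = 2) {t : G} (ht : t ∉ W)
    (A : W →* Multiplicative ℤ) (hA : A ≠ 1)
    (hAt : ∀ w w' : W, (w' : G) = t * w * t⁻¹ → A w' = (A w)⁻¹) :
    ∃ Φ : G →* DihedralGroup 0, Surjective Φ := by
  obtain ⟨A', hA', b, hb, hAA'⟩ := exists_surjective_factor_of_ne_one A hA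
  refine exists_surjective_dihedral_of_surjective hW ht A' hA' fun w w' h => toAdd.injective ?_
  have := congrArg toAdd (hAt w w' h)
  rw [toAdd_inv, hAA', hAA'] at this
  exact mul_right_cancel₀ hb (by rw [this, toAdd_inv, neg_mul])

lemma exists_monoidHom_int_ne_one_conj_eq_inv {W : Subgroup G} (hW : W.index = 2) {t : G} {g : W}
    (hg : t * g * t⁻¹ = (g : G)⁻¹) (τ : W →* Multiplicative ℤ) (hτ : τ g ≠ 1) :
    ∃ A : W →* Multiplicative ℤ, A ≠ 1 ∧
      ∀ w w' : W, (w' : G) = t * w * t⁻¹ → A w' = (A w)⁻¹ := by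
  have := normal_of_index_eq_two hW
  let c : W →* W := (MulAut.conjNormal t).toMonoidHom
  have hc (w w' : W) (h : (w' : G) = t * w * t⁻¹) : w' = c w := Subtype.ext (by simpa [c] using h)
  have hcc (w : W) : τ (c (c w)) = τ w := by
    let s : W := ⟨t * t, mul_self_mem_of_index_two hW t⟩
    have : c (c w) = s * w * s⁻¹ := Subtype.ext (by simp [c, s]; group)
    rw [this, map_mul, map_mul, map_inv, mul_inv_cancel_comm]
  refine ⟨τ / τ.comp c, fun h => hτ ?_, fun w w' h => ?_⟩
  · have h1 := congrArg toAdd (DFunLike.congr_fun h g)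
    simp only [MonoidHom.div_apply, MonoidHom.comp_apply, ← hc g g⁻¹ (by simpa using hg.symm),
      map_inv, MonoidHom.one_apply, toAdd_div, toAdd_inv, toAdd_one] at h1
    exact toAdd.injective (by rw [toAdd_one]; omega)
  · rw [hc w w' h]
    simp [hcc]

end

/-- Every infinite virtually cyclic group is of type I or of type II. -/
theorem typeI_or_typeII (V : Type*) [Group V] [Infinite V] (hV : VirtuallyCyclic V) :
    IsTypeI V ∨ IsTypeII V := by
  obtain ⟨g, _, _, hg⟩ := hV.exists_zpowers_normal
  by_cases hcen : ∀ v : V, v * g * v⁻¹ = g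
  · have hgc : g ∈ center V := mem_center_iff.2 fun v => mul_inv_eq_iff_eq_mul.1 (hcen v)
    obtain ⟨τ, hτ⟩ := exists_monoidHom_int_ne_one_of_mem_center hgc hg
    obtain ⟨f, hf, -⟩ := exists_surjective_factor_of_ne_one τ (ne_of_apply_ne (· g) hτ)
    exact .inl ⟨f, hf⟩
  · obtain ⟨t, ht⟩ := not_forall.1 hcen
    have hconj := conj_eq_or_eq_inv_of_normal_zpowers hg
    have hW := index_centralizer_eq_two hconj ht
    obtain ⟨τ, hτ⟩ := exists_monoidHom_centralizer_int_ne_one hg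
    obtain ⟨A, hA, hAt⟩ :=
      exists_monoidHom_int_ne_one_conj_eq_inv hW ((hconj t).resolve_left ht) τ hτ
    have htW : t ∉ centralizer {g} := mem_centralizer_singleton_iff_conj.not.2 ht
    exact .inr (exists_surjective_dihedral hW htW A hA hAt)
end

section
/- Let V be an infinite virtually cyclic group with unique maximal normal finite subgroup K_V and set Q_V := V/K_V. Then Q_V is infinite cyclic if and only if V is of type I, and Q_V is isomorphic to the infinite dihedral group D∞ if and only if V is of type II. -/
/-!
A surjection `f` from `V` onto `ℤ` or `D∞` is injective on an infinite cyclic subgroup of finite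
index (the image of that subgroup has finite index in an infinite group, so its generator has
infinite order), hence `ker f` is finite and lies in `K`. Conversely `f` maps `K` onto a finite
normal subgroup, and neither `ℤ` (torsion-free) nor `D∞` has a nontrivial one. So `K = ker f`
and `V ⧸ K` is isomorphic to the target of `f`.
-/

open Function Subgroup

namespace Subgroup

variable {G : Type*} [Group G]

lemma finite_of_inf_eq_bot {H N : Subgroup G} [H.FiniteIndex] (h : N ⊓ H = ⊥) : Finite N := by
  have hrel : H.relIndex N ≠ 0 := isFiniteRelIndex_of_finiteIndex.relIndex_ne_zero
  rw [← inf_relIndex_right, inf_comm, h, relIndex_bot_left] at hrel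
  exact Nat.finite_of_card_ne_zero hrel

lemma isOfFinOrder_of_mem {N : Subgroup G} [Finite N] {x : G} (hx : x ∈ N) : IsOfFinOrder x :=
  Submonoid.isOfFinOrder_coe.mpr (isOfFinOrder_of_finite (⟨x, hx⟩ : N))

lemma eq_bot_of_finite [IsMulTorsionFree G] (N : Subgroup G) [Finite N] : N = ⊥ :=
  (eq_bot_iff_forall N).mpr fun _ hx ↦ (isOfFinOrder_of_mem hx).eq_one'

lemma le_ker_of_surjective {V W : Type*} [Group V] [Group W]
    (hW : ∀ N : Subgroup W, N.Normal → Finite N → N = ⊥)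
    (K : Subgroup V) [K.Normal] [Finite K] {f : V →* W} (hf : Surjective f) : K ≤ f.ker :=
  (K.map_eq_bot_iff).mp <| hW _ (‹K.Normal›.map f hf) <|
    Finite.of_surjective (f.subgroupMap K) (f.subgroupMap_surjective K)

end Subgroup

namespace DihedralGroup

lemma eq_zero_of_isOfFinOrder_r {i : ZMod 0} (h : IsOfFinOrder (r i : DihedralGroup 0)) :
    i = 0 := by
  obtain ⟨n, hn, hpow⟩ := h.exists_pow_eq_one
  rw [r_pow, one_def, r.injEq] at hpow
  exact (mul_eq_zero.mp (show (i : ℤ) * n = 0 from hpow)).resolve_right (by exact_mod_cast hn.ne')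

lemma eq_bot_of_finite_of_normal (N : Subgroup (DihedralGroup 0)) [N.Normal] [Finite N] :
    N = ⊥ := by
  refine (eq_bot_iff_forall N).mpr ?_
  rintro (i | i) hi
  · rw [eq_zero_of_isOfFinOrder_r (isOfFinOrder_of_mem hi), r_zero]
  · have hconj : sr (i - 2) ∈ N := by
      have := ‹N.Normal›.conj_mem _ hi (r 1)
      rwa [r_mul_sr, inv_r, sr_mul_r, show i - 1 + -1 = i - 2 by ring] at this
    -- a reflection times its conjugate by `r 1` is the rotation `r (-2)` of infinite order
    have hrot : r (-2) ∈ N := by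
      have := N.mul_mem hi hconj
      rwa [sr_mul_sr, sub_sub_cancel_left] at this
    exact absurd (eq_zero_of_isOfFinOrder_r (isOfFinOrder_of_mem hrot)) (by decide)

end DihedralGroup

namespace VirtuallyCyclic

variable {V W : Type*} [Group V] [Group W]

lemma finite_ker_of_surjective [Infinite W] (hV : VirtuallyCyclic V) {f : V →* W}
    (hf : Surjective f) : Finite f.ker := by
  obtain ⟨C, hC, hCfin⟩ := hV
  obtain ⟨c, rfl⟩ := (C.isCyclic_iff_exists_zpowers_eq_top).mp hC
  have hfc : ¬IsOfFinOrder (f c) := by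
    intro hfin
    have : (zpowers (f c)).FiniteIndex := by
      rw [← f.map_zpowers]
      exact ⟨fun h ↦ hCfin.index_ne_zero (Nat.eq_zero_of_zero_dvd (h ▸ index_map_dvd _ hf))⟩
    have : Finite (zpowers (f c)) := hfin.finite_zpowers.to_subtype
    have : Finite W := (zpowers (f c)).finite_iff_finite_and_finiteIndex.mpr ⟨‹_›, ‹_›⟩
    exact not_finite W
  refine finite_of_inf_eq_bot (H := zpowers c) ((eq_bot_iff_forall _).mpr ?_)
  rintro _ ⟨hker, hpow⟩
  obtain ⟨k, rfl⟩ := mem_zpowers_iff.mp hpow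
  have hk : k = 0 := injective_zpow_iff_not_isOfFinOrder.mpr hfc
    (by simpa using (f.mem_ker.mp hker : f (c ^ k) = 1))
  rw [hk, zpow_zero]

theorem nonempty_quotient_mulEquiv_iff [Infinite W]
    (hW : ∀ N : Subgroup W, N.Normal → Finite N → N = ⊥) (hV : VirtuallyCyclic V)
    (K : Subgroup V) [K.Normal] [Finite K] (hmax : ∀ L : Subgroup V, L.Normal → Finite L → L ≤ K) :
    Nonempty ((V ⧸ K) ≃* W) ↔ ∃ f : V →* W, Surjective f := by
  refine ⟨fun ⟨e⟩ ↦ ⟨e.toMonoidHom.comp (QuotientGroup.mk' K),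
    e.surjective.comp (QuotientGroup.mk'_surjective K)⟩, fun ⟨f, hf⟩ ↦ ?_⟩
  have hK : K = f.ker := le_antisymm (K.le_ker_of_surjective hW hf)
    (hmax _ inferInstance (hV.finite_ker_of_surjective hf))
  exact ⟨(QuotientGroup.quotientMulEquivOfEq hK).trans
    (QuotientGroup.quotientKerEquivOfSurjective f hf)⟩

end VirtuallyCyclic

theorem quotient_by_maximal_finite_normal_cyclic_iff_general (V : Type*) [Group V]
    (hV : VirtuallyCyclic V) (K : Subgroup V) [K.Normal] [Finite K]
    (hmax : ∀ L : Subgroup V, L.Normal → Finite L → L ≤ K) :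
    (Nonempty ((V ⧸ K) ≃* Multiplicative ℤ) ↔ IsTypeI V) ∧
    (Nonempty ((V ⧸ K) ≃* DihedralGroup 0) ↔ IsTypeII V) :=
  ⟨hV.nonempty_quotient_mulEquiv_iff (fun N _ _ ↦ N.eq_bot_of_finite) K hmax,
    hV.nonempty_quotient_mulEquiv_iff
      (fun N _ _ ↦ DihedralGroup.eq_bot_of_finite_of_normal N) K hmax⟩

/-- For an infinite virtually cyclic group `V` with maximal normal finite subgroup `K`,
the quotient `Q_V = V/K` is infinite cyclic iff `V` is of type I, and is isomorphic to the
infinite dihedral group iff `V` is of type II. -/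
theorem quotient_by_maximal_finite_normal_cyclic_iff (V : Type*) [Group V] [Infinite V]
    (hV : VirtuallyCyclic V) (K : Subgroup V) [K.Normal] [Finite K]
    (hmax : ∀ L : Subgroup V, L.Normal → Finite L → L ≤ K) :
    (Nonempty ((V ⧸ K) ≃* Multiplicative ℤ) ↔ IsTypeI V) ∧
    (Nonempty ((V ⧸ K) ≃* DihedralGroup 0) ↔ IsTypeII V) :=
  quotient_by_maximal_finite_normal_cyclic_iff_general V hV K hmax
end

section
/- Let φ : V → W be a group homomorphism between infinite virtually cyclic groups whose image is infinite. Then φ maps K_V into K_W, and the induced homomorphism φ_Q : V/K_V → W/K_W on the quotients is injective. -/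
/-!
Both parts rest on the dichotomy that a subgroup of a virtually cyclic group is finite or of
finite index. As `φ` has infinite image, its kernel is finite, so `φ⁻¹(K_W)` is a finite normal
subgroup of `V`, hence lies in `K_V`: this is the injectivity on the quotients.

For `φ(K_V) ≤ K_W` it suffices that the normal closure `N` of the finite subgroup `F = φ(K_V)`
is finite. `F` is normalised by the finite-index subgroup `φ(V)`, so its centraliser has finite
index and contains a torsion-free normal subgroup `D` of finite index (taken inside the infinite
cyclic subgroup). All conjugates of `F` centralise `D`, so `N` lies in `Z = C_W(D)`, whose centre
has finite index. Through the transfer `Z → Z(Z)`, `g ↦ g ^ [Z : Z(Z)]`, the elements of finite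
order of `Z` are closed under multiplication, so `N` is torsion, meets `D` trivially, and is
therefore finite.
-/

open Subgroup

section Cyclic

variable {G : Type*} [Group G] [IsCyclic G]

theorem IsCyclic.finiteIndex_of_ne_bot {N : Subgroup G} (hN : N ≠ ⊥) : N.FiniteIndex := by
  obtain ⟨g, hg⟩ := IsCyclic.exists_generator (α := G)
  obtain ⟨x, hxN, hx1⟩ := N.bot_or_exists_ne_one.resolve_left hN
  obtain ⟨k, hk⟩ := mem_zpowers_iff.mp (hg x)
  have hk0 : k ≠ 0 := by rintro rfl; simp_all
  have hgen : ∀ q : G ⧸ N, q ∈ zpowers (g : G ⧸ N) := fun q ↦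
    QuotientGroup.induction_on q fun y ↦ by
      obtain ⟨j, rfl⟩ := mem_zpowers_iff.mp (hg y)
      exact ⟨j, (QuotientGroup.mk_zpow N g j).symm⟩
  have hfin : IsOfFinOrder (g : G ⧸ N) := isOfFinOrder_iff_zpow_eq_one.mpr
    ⟨k, hk0, by rw [← QuotientGroup.mk_zpow N, hk, QuotientGroup.eq_one_iff]; exact hxN⟩
  have : Finite (G ⧸ N) := by
    by_contra hinf
    rw [not_finite_iff_infinite] at hinf
    exact hfin.orderOf_pos.ne' (Infinite.orderOf_eq_zero_of_forall_mem_zpowers hgen)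
  exact finiteIndex_of_finite_quotient

theorem IsCyclic.eq_one_of_isOfFinOrder [Infinite G] {x : G} (hx : IsOfFinOrder x) : x = 1 := by
  by_contra hx1
  have := IsCyclic.finiteIndex_of_ne_bot (zpowers_ne_bot.mpr hx1)
  have : Finite (zpowers x) := hx.finite_zpowers.to_subtype
  have := (finite_iff_finite_and_finiteIndex (zpowers x)).mpr ⟨‹_›, ‹_›⟩
  exact not_finite G

end Cyclic

section

variable {G G' : Type*} [Group G] [Group G']

theorem Subgroup.finiteIndex_of_relIndex_ne_zero {H K : Subgroup G} [K.FiniteIndex]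
    (h : H.relIndex K ≠ 0) : H.FiniteIndex := by
  refine ⟨?_⟩
  rw [← relIndex_top_right] at *
  exact relIndex_ne_zero_trans h (by rw [relIndex_top_right]; exact FiniteIndex.index_ne_zero)

theorem Subgroup.finite_of_disjoint_of_finiteIndex {N H : Subgroup G} [H.FiniteIndex]
    (h : Disjoint N H) : Finite N := by
  have : H.IsFiniteRelIndex N := isFiniteRelIndex_of_finiteIndex
  refine Nat.finite_of_card_ne_zero ?_
  rw [← relIndex_bot_left, ← h.symm.eq_bot, inf_relIndex_right]
  exact relIndex_ne_zero

theorem isOfFinOrder_mul_of_finiteIndex_center [(center G).FiniteIndex] {x y : G}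
    (hx : IsOfFinOrder x) (hy : IsOfFinOrder y) : IsOfFinOrder (x * y) := by
  let τ := MonoidHom.transferCenterPow G
  have hcomm : Commute (τ x) (τ y) := Subtype.ext (mem_center_iff.mp (τ y).2 (τ x))
  have hτ : IsOfFinOrder (τ (x * y)) := by
    rw [map_mul]
    exact hcomm.isOfFinOrder_mul (τ.isOfFinOrder hx) (τ.isOfFinOrder hy)
  exact ((center G).subtype.isOfFinOrder hτ).of_pow FiniteIndex.index_ne_zero

theorem finite_normalClosure_of_subset_centralizer {D : Subgroup G} [D.Normal] [D.FiniteIndex]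
    (hD : ∀ x ∈ D, IsOfFinOrder x → x = 1) {S : Set G} (hS : ∀ s ∈ S, IsOfFinOrder s)
    (hSD : S ⊆ centralizer (D : Set G)) : Finite (normalClosure S) := by
  set Z := centralizer (D : Set G)
  have hNZ : normalClosure S ≤ Z := normalClosure_le_normal hSD
  have : (center Z).FiniteIndex := finiteIndex_of_le (H := D.subgroupOf Z) fun z hz ↦
    mem_center_iff.mpr fun g ↦ Subtype.ext (mem_centralizer_iff.mp g.2 z hz).symm
  have htorsion : ∀ x (hx : x ∈ normalClosure S), IsOfFinOrder (⟨x, hNZ hx⟩ : Z) := by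
    intro x hx
    induction hx using closure_induction with
    | mem y hy =>
      obtain ⟨s, hs, hconj⟩ := Group.mem_conjugatesOfSet_iff.mp hy
      rw [← orderOf_pos_iff, orderOf_mk, orderOf_pos_iff]
      exact hconj.isOfFinOrder (hS s hs)
    | one => exact IsOfFinOrder.one
    | mul _ _ _ _ hy hz => exact isOfFinOrder_mul_of_finiteIndex_center hy hz
    | inv _ _ hy => exact hy.inv
  exact finite_of_disjoint_of_finiteIndex (H := D)
    (disjoint_def.mpr fun hxN hxD ↦ hD _ hxD (Z.subtype.isOfFinOrder (htorsion _ hxN)))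

theorem Subgroup.finiteIndex_centralizer (H : Subgroup G) [Finite H]
    [(normalizer (H : Set G)).FiniteIndex] : (centralizer (H : Set G)).FiniteIndex := by
  refine finiteIndex_of_relIndex_ne_zero (K := normalizer (H : Set G)) ?_
  rw [relIndex, ← normalizerMonoidHom_ker, index_ker]
  exact Nat.card_pos.ne'

theorem Subgroup.finite_comap_of_finite_ker (f : G →* G') [Finite f.ker] (K : Subgroup G')
    [Finite K] : Finite (K.comap f) := by
  rw [(f.domRestrict (K.comap f)).finite_iff_finite_ker_range, MonoidHom.ker_domRestrict,
    MonoidHom.domRestrict_range]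
  refine ⟨?_, ((K : Set G').toFinite.subset (map_comap_le f K)).to_subtype⟩
  exact Finite.of_injective (fun x : f.ker.subgroupOf (K.comap f) ↦ (⟨x, x.2⟩ : f.ker))
    fun _ _ h ↦ by ext; exact congrArg (Subtype.val : f.ker → G) h

end

namespace VirtuallyCyclic

variable {G G' : Type*} [Group G] [Group G']

theorem finiteIndex_or_finite (hG : VirtuallyCyclic G) (N : Subgroup G) :
    N.FiniteIndex ∨ Finite N := by
  obtain ⟨H, hcyc, hfi⟩ := hG
  by_cases hNH : N.subgroupOf H = ⊥
  · exact .inr (finite_of_disjoint_of_finiteIndex (subgroupOf_eq_bot.mp hNH))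
  · have := IsCyclic.finiteIndex_of_ne_bot hNH
    exact .inl (finiteIndex_of_relIndex_ne_zero (K := H) FiniteIndex.index_ne_zero)

theorem finiteIndex_of_infinite (hG : VirtuallyCyclic G) {N : Subgroup G} (hN : Infinite N) :
    N.FiniteIndex :=
  (hG.finiteIndex_or_finite N).resolve_right (not_finite_iff_infinite.mpr hN)

theorem finite_ker (hG : VirtuallyCyclic G) (f : G →* G') (hf : Infinite f.range) :
    Finite f.ker := by
  refine (hG.finiteIndex_or_finite f.ker).resolve_left fun _ ↦ ?_
  have : Finite f.range :=
    (QuotientGroup.quotientKerEquivRange f).toEquiv.finite_iff.mp inferInstance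
  exact not_finite_iff_infinite.mpr hf this

theorem exists_normal_finiteIndex_le_torsionFree [Infinite G] (hG : VirtuallyCyclic G)
    (K : Subgroup G) [K.FiniteIndex] :
    ∃ D : Subgroup G, D.Normal ∧ D.FiniteIndex ∧ D ≤ K ∧ ∀ x ∈ D, IsOfFinOrder x → x = 1 := by
  obtain ⟨H, hcyc, hfi⟩ := hG
  have : Infinite H := not_finite_iff_infinite.mp fun _ ↦
    have := (finite_iff_finite_and_finiteIndex H).mpr ⟨‹_›, hfi⟩
    not_finite G
  refine ⟨(H ⊓ K).normalCore, inferInstance, inferInstance, normalCore_le _ |>.trans inf_le_right,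
    fun x hx hfin ↦ ?_⟩
  have hxH : x ∈ H := (normalCore_le _ hx).1
  have : IsOfFinOrder (⟨x, hxH⟩ : H) := by rwa [← orderOf_pos_iff, orderOf_mk, orderOf_pos_iff]
  exact congrArg Subtype.val (IsCyclic.eq_one_of_isOfFinOrder this)

theorem finite_normalClosure [Infinite G] (hG : VirtuallyCyclic G) (F : Subgroup G) [Finite F]
    [(normalizer (F : Set G)).FiniteIndex] : Finite (normalClosure (F : Set G)) := by
  have := F.finiteIndex_centralizer
  obtain ⟨D, _, _, hDF, hD⟩ :=
    hG.exists_normal_finiteIndex_le_torsionFree (centralizer (F : Set G))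
  refine finite_normalClosure_of_subset_centralizer hD (fun x hx ↦ ?_) (le_centralizer_iff.mp hDF)
  exact F.subtype.isOfFinOrder (isOfFinOrder_of_finite (⟨x, hx⟩ : F))

end VirtuallyCyclic

theorem map_maximal_finite_normal_and_injective_on_quotients_general
    (V W : Type*) [Group V] [Group W]
    (hV : VirtuallyCyclic V) (hW : VirtuallyCyclic W)
    (KV : Subgroup V) [KV.Normal] [Finite KV]
    (hKV : ∀ L : Subgroup V, L.Normal → Finite L → L ≤ KV)
    (KW : Subgroup W) [KW.Normal] [Finite KW]
    (hKW : ∀ L : Subgroup W, L.Normal → Finite L → L ≤ KW)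
    (φ : V →* W) (him : Infinite φ.range) :
    ∃ h : KV ≤ KW.comap φ, Function.Injective (QuotientGroup.map KV KW φ h) := by
  have : Infinite W := Infinite.of_injective (Subtype.val : φ.range → W) Subtype.val_injective
  have hnormalizer : φ.range ≤ normalizer (KV.map φ : Set W) := by
    rw [MonoidHom.range_eq_map, ← normalizer_eq_top (H := KV)]
    exact le_normalizer_map φ
  have := hW.finiteIndex_of_infinite him
  have := finiteIndex_of_le hnormalizer
  have : Finite (KV.map φ) := Finite.Set.finite_image (KV : Set V) φ
  have hmap : KV.map φ ≤ KW := subset_normalClosure.trans <|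
    hKW _ normalClosure_normal (hW.finite_normalClosure (KV.map φ))
  refine ⟨map_le_iff_le_comap.mp hmap, ?_⟩
  have := hV.finite_ker φ him
  have hcomap : KW.comap φ ≤ KV := hKV _ inferInstance (finite_comap_of_finite_ker φ KW)
  rwa [← MonoidHom.ker_eq_bot_iff, QuotientGroup.ker_map, Subgroup.map_eq_bot_iff,
    QuotientGroup.ker_mk']

/-- A homomorphism `φ : V → W` of infinite virtually cyclic groups with infinite image maps
the maximal normal finite subgroup `K_V` into `K_W`, and the induced homomorphism
`V/K_V → W/K_W` is injective. -/
theorem map_maximal_finite_normal_and_injective_on_quotients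
    (V W : Type*) [Group V] [Group W] [Infinite V] [Infinite W]
    (hV : VirtuallyCyclic V) (hW : VirtuallyCyclic W)
    (KV : Subgroup V) [KV.Normal] [Finite KV]
    (hKV : ∀ L : Subgroup V, L.Normal → Finite L → L ≤ KV)
    (KW : Subgroup W) [KW.Normal] [Finite KW]
    (hKW : ∀ L : Subgroup W, L.Normal → Finite L → L ≤ KW)
    (φ : V →* W) (him : Infinite φ.range) :
    ∃ h : KV ≤ KW.comap φ, Function.Injective (QuotientGroup.map KV KW φ h) :=
  map_maximal_finite_normal_and_injective_on_quotients_general V W hV hW KV hKV KW hKW φ him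
end

section
/- Let V be a group admitting a finite normal subgroup K such that V/K is isomorphic to the infinite dihedral group D∞. Then the abelianization H₁(V) of V is finite. In particular, an infinite virtually cyclic group of type II is not of type I. -/
/-!
If `f : G →* H` is surjective, the kernel of the induced map on abelianizations is the image of
`ker f`, so a surjection with finite kernel onto a group with finite abelianization has finite
abelianization itself. In `D∞` every element is conjugate to its inverse (reflections are
involutions, and conjugating by a reflection inverts rotations), so its abelianization is a finitely
generated abelian group of exponent dividing `2`, hence finite.
-/

namespace Abelianization

variable {G H : Type*} [Group G] [Group H]

theorem of_surjective : Function.Surjective (of : G →* Abelianization G) :=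
  QuotientGroup.mk_surjective

theorem ker_map_le_map_ker {f : G →* H} (hf : Function.Surjective f) :
    (map f).ker ≤ f.ker.map of := by
  rintro x hx
  obtain ⟨v, rfl⟩ := of_surjective x
  rw [MonoidHom.mem_ker, map_of, ← MonoidHom.mem_ker, ker_of, commutator_def,
    ← Subgroup.map_top_of_surjective f hf, ← Subgroup.map_commutator] at hx
  obtain ⟨c, hc, hfc⟩ := hx
  have hc1 : of c = 1 := by rwa [← MonoidHom.mem_ker, ker_of, commutator_def]
  refine ⟨v * c⁻¹, by simp [hfc], ?_⟩
  rw [map_mul, map_inv, hc1, inv_one, mul_one]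

theorem finite_of_surjective {f : G →* H} (hf : Function.Surjective f) [Finite f.ker]
    [Finite (Abelianization H)] : Finite (Abelianization G) := by
  have : Finite (f.ker.map of) := Finite.of_surjective _ (of.subgroupMap_surjective f.ker)
  have : Finite (map f).ker :=
    Finite.of_injective _ (Subgroup.inclusion_injective (ker_map_le_map_ker hf))
  exact (map f).finite_iff_finite_ker_range.mpr ⟨inferInstance, inferInstance⟩

theorem isMulTorsion_of_forall_isConj_inv (h : ∀ g : G, IsConj g g⁻¹) :
    IsMulTorsion (Abelianization G) := by
  intro x
  obtain ⟨g, rfl⟩ := of_surjective x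
  have hinv : of g = (of g)⁻¹ := by
    rw [← map_inv, ← isConj_iff_eq]
    exact of.map_isConj (h g)
  refine isOfFinOrder_iff_pow_eq_one.mpr ⟨2, two_pos, ?_⟩
  rw [sq]
  nth_rw 1 [hinv]
  exact inv_mul_cancel _

instance [Group.FG G] : Group.FG (Abelianization G) :=
  Group.fg_of_surjective of_surjective

theorem finite_of_forall_isConj_inv [Group.FG G] (h : ∀ g : G, IsConj g g⁻¹) :
    Finite (Abelianization G) :=
  CommGroup.finite_of_fg_isMulTorsion _ (isMulTorsion_of_forall_isConj_inv h)

end Abelianization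

namespace DihedralGroup

variable {n : ℕ}

theorem closure_r_one_sr_zero :
    Subgroup.closure {r 1, sr 0} = (⊤ : Subgroup (DihedralGroup n)) := by
  have hr : ∀ i : ZMod n, r i ∈ Subgroup.closure {r 1, sr 0} := fun i => by
    rw [← ZMod.intCast_zmod_cast i, ← r_one_zpow]
    exact Subgroup.zpow_mem _ (Subgroup.subset_closure (by simp)) _
  refine eq_top_iff.mpr fun g _ => ?_
  rcases g with i | i
  · exact hr i
  · rw [← zero_add i, ← sr_mul_r]
    exact Subgroup.mul_mem _ (Subgroup.subset_closure (by simp)) (hr i)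

instance : Group.FG (DihedralGroup n) :=
  ⟨⟨{r 1, sr 0}, by simpa using closure_r_one_sr_zero⟩⟩

theorem isConj_inv (g : DihedralGroup n) : IsConj g g⁻¹ := by
  rcases g with i | i
  · refine isConj_iff.mpr ⟨sr 0, ?_⟩
    rw [inv_sr, sr_mul_r, sr_mul_sr, inv_r, zero_sub, zero_add]
  · rw [inv_sr]

instance : Finite (Abelianization (DihedralGroup n)) :=
  Abelianization.finite_of_forall_isConj_inv isConj_inv

end DihedralGroup

/-- If a group `V` has a finite normal subgroup `K` with `V/K` isomorphic to the infinite
dihedral group `D∞`, then the abelianization of `V` is finite. -/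
theorem finite_abelianization_of_quotient_dihedral (V : Type*) [Group V]
    (K : Subgroup V) [K.Normal] [Finite K]
    (h : Nonempty ((V ⧸ K) ≃* DihedralGroup 0)) :
    Finite (Abelianization V) := by
  obtain ⟨e⟩ := h
  have : Finite (Abelianization (V ⧸ K)) := e.abelianizationCongr.finite_iff.mpr inferInstance
  have : Finite (QuotientGroup.mk' K).ker := by rwa [QuotientGroup.ker_mk']
  exact Abelianization.finite_of_surjective (QuotientGroup.mk'_surjective K)
end

section
/- An infinite virtually cyclic group has only finitely many distinct finite normal subgroups. -/
open scoped Pointwise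


/-- An infinite virtually cyclic group has only finitely many finite normal subgroups. -/
theorem finitely_many_finite_normal_subgroups (V : Type*) [Group V] [Infinite V]
    (hV : VirtuallyCyclic V) :
    {K : Subgroup V | K.Normal ∧ Finite K}.Finite := by
  obtain ⟨H, hcyc, hfi⟩ := hV
  haveI := hfi
  -- H is infinite
  haveI hHinf : Infinite ↥H := by
    by_contra hfin
    rw [not_infinite_iff_finite] at hfin
    haveI := hfin
    have hcard : H.index * Nat.card ↥H = 0 :=
      (Subgroup.index_mul_card H).trans Nat.card_eq_zero_of_infinite
    rcases Nat.mul_eq_zero.1 hcard with h | h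
    · exact hfi.index_ne_zero h
    · exact Nat.card_pos.ne' h
  -- infinite cyclic groups are torsion free
  have htf : ∀ x : ↥H, IsOfFinOrder x → x = 1 := by
    obtain ⟨g, hg⟩ := hcyc
    have hgo : ¬IsOfFinOrder g := by
      rw [← orderOf_eq_zero_iff]
      exact Infinite.orderOf_eq_zero_of_forall_mem_zpowers hg
    have hinj : Function.Injective fun n : ℤ => g ^ n :=
      injective_zpow_iff_not_isOfFinOrder.2 hgo
    intro x hx
    obtain ⟨k, hk0⟩ := hg x
    have hk : g ^ k = x := hk0
    obtain ⟨n, hn, hxn⟩ := isOfFinOrder_iff_pow_eq_one.1 hx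
    have : g ^ (k * (n : ℤ)) = g ^ (0 : ℤ) := by
      rw [zpow_mul, hk, zpow_zero, zpow_natCast, hxn]
    have hk0 : k * (n : ℤ) = 0 := hinj this
    have : k = 0 := by
      rcases mul_eq_zero.1 hk0 with h | h
      · exact h
      · exact absurd h (by exact_mod_cast hn.ne')
    rw [← hk, this, zpow_zero]
  -- every finite normal subgroup meets H trivially, hence has card ≤ H.index
  set S := {K : Subgroup V | K.Normal ∧ Finite K} with hS
  have hbound : ∀ K ∈ S, Nat.card ↥K ≤ H.index := by
    rintro K ⟨-, hKfin⟩
    haveI := hKfin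
    have hinj : Function.Injective fun k : ↥K => (QuotientGroup.mk (s := H) (k : V)) := by
      intro a b hab
      have hmem : ((a : V))⁻¹ * b ∈ H := (QuotientGroup.eq (s := H)).1 hab
      have hmemK : ((a : V))⁻¹ * b ∈ K := K.mul_mem (K.inv_mem a.2) b.2
      have hfo : IsOfFinOrder (((a : V))⁻¹ * b) := by
        have := isOfFinOrder_of_finite (⟨_, hmemK⟩ : ↥K)
        exact K.subtype.isOfFinOrder this
      have hfoH : IsOfFinOrder (⟨_, hmem⟩ : ↥H) := by
        obtain ⟨n, hn, hxn⟩ := isOfFinOrder_iff_pow_eq_one.1 hfo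
        exact isOfFinOrder_iff_pow_eq_one.2 ⟨n, hn, by ext; simpa using hxn⟩
      have := htf _ hfoH
      have h1 : ((a : V))⁻¹ * b = 1 := by simpa [Subtype.ext_iff] using this
      exact Subtype.ext (inv_mul_eq_one.1 h1)
    calc Nat.card ↥K ≤ Nat.card (V ⧸ H) := Nat.card_le_card_of_injective _ hinj
      _ = H.index := rfl
  -- choose a finite normal subgroup of maximal cardinality
  have hbotS : (⊥ : Subgroup V) ∈ S := ⟨inferInstance, inferInstance⟩
  set T := (fun K : Subgroup V => Nat.card ↥K) '' S with hT
  have hTne : T.Nonempty := ⟨_, ⟨⊥, hbotS, rfl⟩⟩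
  have hTbdd : ∀ n ∈ T, n ≤ H.index := by rintro n ⟨K, hK, rfl⟩; exact hbound K hK
  have hmem := Nat.sSup_mem hTne ⟨H.index, hTbdd⟩
  obtain ⟨K₀, hK₀S, hK₀card0⟩ := hmem
  have hK₀card : Nat.card ↥K₀ = sSup T := hK₀card0
  haveI hK₀n : K₀.Normal := hK₀S.1
  haveI hK₀fin : Finite ↥K₀ := hK₀S.2
  -- every finite normal subgroup is contained in K₀
  have hle : ∀ K ∈ S, K ≤ K₀ := by
    rintro K hK
    haveI hKn : K.Normal := hK.1
    haveI hKfin : Finite ↥K := hK.2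
    have hJfin : Finite ↥(K ⊔ K₀) := by
      have : ((K ⊔ K₀ : Subgroup V) : Set V) = (K : Set V) * (K₀ : Set V) :=
        Subgroup.mul_normal K K₀
      have hfin : ((K : Set V) * (K₀ : Set V)).Finite :=
        Set.Finite.mul (Set.toFinite _) (Set.toFinite _)
      have h2 : ((K ⊔ K₀ : Subgroup V) : Set V).Finite := by rw [this]; exact hfin
      exact h2.to_subtype
    have hJS : K ⊔ K₀ ∈ S := ⟨inferInstance, hJfin⟩
    have h1 : Nat.card ↥(K ⊔ K₀) ≤ Nat.card ↥K₀ := by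
      rw [hK₀card]
      exact le_csSup ⟨H.index, fun n hn => hTbdd n hn⟩ ⟨_, hJS, rfl⟩
    haveI := hJfin
    have : K₀ = K ⊔ K₀ := Subgroup.eq_of_le_of_card_ge le_sup_right h1
    rw [this]
    exact le_sup_left
  -- conclude: S injects into the subsets of the finite set K₀
  have : S ⊆ SetLike.coe ⁻¹' {s : Set V | s ⊆ (K₀ : Set V)} := by
    intro K hK x hx
    exact hle K hK hx
  have hps : {s : Set V | s ⊆ (K₀ : Set V)}.Finite :=
    Set.Finite.finite_subsets (Set.toFinite _)
  exact Set.Finite.of_finite_image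
    (hps.subset (Set.image_subset_iff.2 this)) (SetLike.coe_injective.injOn)
end

section
/- Let G be a group. On the set of infinite virtually cyclic subgroups of G of type I, the relation V₁ ∼ V₂ defined by 'there exists g ∈ G such that gV₁g⁻¹ ∩ V₂ is infinite' is an equivalence relation. -/
open scoped Pointwise

theorem IsCyclic.finiteIndex_of_ne_bot_s14 {C : Type*} [Group C] [IsCyclic C] {K : Subgroup C}
    (hK : K ≠ ⊥) : K.FiniteIndex := by
  obtain ⟨⟨x, hxK⟩, hx1⟩ := Subgroup.ne_bot_iff_exists_ne_one.mp hK
  obtain ⟨c, hc⟩ := IsCyclic.exists_generator (α := C)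
  obtain ⟨m, rfl⟩ := hc x
  have hm : m ≠ 0 := by rintro rfl; simp at hx1
  have : IsCyclic (C ⧸ K) := isCyclic_of_surjective _ (QuotientGroup.mk'_surjective K)
  have hexp : Monoid.ExponentExists (C ⧸ K) := by
    refine ⟨m.natAbs, Int.natAbs_pos.mpr hm, fun q => ?_⟩
    induction q using QuotientGroup.induction_on with
    | H g =>
      obtain ⟨k, rfl⟩ := hc g
      rw [pow_natAbs_eq_one, ← QuotientGroup.mk_zpow, QuotientGroup.eq_one_iff, ← zpow_mul,
        mul_comm, zpow_mul]
      exact K.zpow_mem hxK k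
  rw [Subgroup.finiteIndex_iff_finite_quotient, ← not_infinite_iff_finite]
  intro
  exact Monoid.exponent_ne_zero.mpr hexp IsCyclic.exponent_eq_zero_of_infinite

namespace Subgroup

variable {G : Type*} [Group G]

theorem infinite_of_finiteIndex_s14 [Infinite G] (H : Subgroup G) [H.FiniteIndex] : Infinite H := by
  rw [← not_finite_iff_infinite]
  intro hH
  have := (finite_iff_finite_and_finiteIndex H).mpr ⟨hH, inferInstance⟩
  exact not_finite G

theorem infinite_of_le {H K : Subgroup G} (h : H ≤ K) (hH : Infinite H) : Infinite K :=
  Infinite.of_injective (inclusion h) (inclusion_injective h)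

theorem infinite_subgroupOf_iff {H K : Subgroup G} :
    Infinite (H.subgroupOf K) ↔ Infinite ↥(H ⊓ K) := by
  rw [← inf_subgroupOf_right]
  exact (subgroupOfEquivOfLe inf_le_right).toEquiv.infinite_iff

theorem infinite_inf_of_relIndex_ne_zero {H K : Subgroup G} [Infinite K] (h : H.relIndex K ≠ 0) :
    Infinite ↥(H ⊓ K) :=
  have : (H.subgroupOf K).FiniteIndex := ⟨h⟩
  infinite_subgroupOf_iff.mp (infinite_of_finiteIndex_s14 _)

theorem infinite_smul_iff {α : Type*} [Group α] [MulDistribMulAction α G] (a : α)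
    (H : Subgroup G) : Infinite ↥(a • H) ↔ Infinite H :=
  (H.equivSMul a).toEquiv.infinite_iff.symm

theorem infinite_smul_inf_iff {α : Type*} [Group α] [MulDistribMulAction α G] (a : α)
    (H K : Subgroup G) : Infinite ↥(a • H ⊓ K) ↔ Infinite ↥(H ⊓ a⁻¹ • K) := by
  rw [← infinite_smul_iff a⁻¹, smul_inf, inv_smul_smul]

end Subgroup

namespace VirtuallyCyclic

open Subgroup

theorem finiteIndex_of_infinite_s14 {V : Type*} [Group V] [Infinite V] (hV : VirtuallyCyclic V)
    (K : Subgroup V) [Infinite K] : K.FiniteIndex := by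
  obtain ⟨C, hC, hCfin⟩ := hV
  have hCK : Infinite ↥(C ⊓ K) :=
    infinite_inf_of_relIndex_ne_zero (isFiniteRelIndex_of_finiteIndex (H := C)).relIndex_ne_zero
  have hKC : K.relIndex C ≠ 0 := by
    refine (IsCyclic.finiteIndex_of_ne_bot_s14 fun hbot => ?_).index_ne_zero
    rw [subgroupOf_eq_bot, disjoint_iff, inf_comm] at hbot
    rw [hbot] at hCK
    exact not_finite ↥(⊥ : Subgroup V)
  rw [finiteIndex_iff, ← relIndex_top_right]
  exact relIndex_ne_zero_trans hKC (C.relIndex_top_right ▸ hCfin.index_ne_zero)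

end VirtuallyCyclic

namespace Subgroup

variable {G : Type*} [Group G]

theorem relIndex_ne_zero_of_infinite_inf {H K : Subgroup G} (hK : VirtuallyCyclic K)
    (h : Infinite ↥(H ⊓ K)) : H.relIndex K ≠ 0 :=
  have : Infinite K := infinite_of_le inf_le_right h
  have : Infinite (H.subgroupOf K) := infinite_subgroupOf_iff.mpr h
  (hK.finiteIndex_of_infinite_s14 _).index_ne_zero

theorem infinite_inf_trans {A B C : Subgroup G} (hB : VirtuallyCyclic B)
    (hAB : Infinite ↥(A ⊓ B)) (hBC : Infinite ↥(B ⊓ C)) : Infinite ↥(A ⊓ C) := by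
  have : Infinite B := infinite_of_le inf_le_right hAB
  rw [inf_comm] at hBC
  have : Infinite ↥(A ⊓ C ⊓ B) := infinite_inf_of_relIndex_ne_zero <|
    relIndex_inf_ne_zero (relIndex_ne_zero_of_infinite_inf hB hAB)
      (relIndex_ne_zero_of_infinite_inf hB hBC)
  exact infinite_of_le inf_le_left this

theorem map_conj_eq_smul (g : G) (H : Subgroup G) :
    H.map (MulAut.conj g).toMonoidHom = ConjAct.toConjAct g • H :=
  rfl

end Subgroup

/-- On the set of infinite virtually cyclic subgroups of `G` of type I, the relation
`V₁ ∼ V₂ ⟺ ∃ g ∈ G, gV₁g⁻¹ ∩ V₂ is infinite` is an equivalence relation. -/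
theorem commensurability_equivalence (G : Type*) [Group G] :
    Equivalence (fun V₁ V₂ : {V : Subgroup G // Infinite ↥V ∧ VirtuallyCyclic ↥V ∧ IsTypeI ↥V} =>
      ∃ g : G, Infinite ↥(Subgroup.map (MulAut.conj g).toMonoidHom V₁.1 ⊓ V₂.1)) := by
  simp only [Subgroup.map_conj_eq_smul]
  refine ⟨fun V => ⟨1, ?_⟩, fun ⟨g, hg⟩ => ⟨g⁻¹, ?_⟩, fun {_ V₂ _} ⟨g, hg⟩ ⟨h, hh⟩ => ⟨h * g, ?_⟩⟩
  · simpa using V.2.1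
  · rwa [map_inv, Subgroup.infinite_smul_inf_iff, inv_inv, inf_comm]
  · rw [Subgroup.infinite_smul_inf_iff] at hh
    rw [map_mul, mul_smul, Subgroup.infinite_smul_inf_iff]
    exact Subgroup.infinite_inf_trans V₂.2.2.1 hg hh
end

section
/- Let G be a group such that every infinite virtually cyclic subgroup of G is of type I and such that the Klein bottle group ℤ ⋊ ℤ (the semidirect product of ℤ with ℤ where the generator acts by −1) is not isomorphic to any subgroup of G. Then for every infinite cyclic subgroup C of G and every element g of the normalizer N_G(C), conjugation by g induces the identity automorphism on C. -/
/-- The fundamental group of the Klein bottle: the semidirect product `ℤ ⋊ ℤ`, where the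
generator of the second factor acts on the first by inversion. -/
abbrev KleinBottleGroup : Type :=
  Multiplicative ℤ ⋊[zpowersHom (MulAut (Multiplicative ℤ)) (MulEquiv.inv (Multiplicative ℤ))]
    Multiplicative ℤ

/-!
Let `C = ⟨x⟩` with `x` of infinite order. An element `g` normalizing `C` induces an automorphism
of `C`, so `g x g⁻¹ = x` or `g x g⁻¹ = x⁻¹`. In the second case `a ↦ x`, `b ↦ g` defines a
homomorphism `φ` from the Klein bottle group `⟨a, b | b a b⁻¹ = a⁻¹⟩` to `G`, which cannot be
injective. A nontrivial element `aⁱ bʲ` of its kernel has `j ≠ 0`, so `⟨x⟩` has finite index in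
the infinite group `φ(ℤ ⋊ ℤ)`, which therefore surjects onto `ℤ`. But every homomorphism from the
Klein bottle group to `ℤ` kills `a` (as `a` is conjugate to `a⁻¹`) and then `bʲ`, hence `b`, so it
is trivial.
-/

theorem Function.Semiconj.mulAut_zpow {M N : Type*} [Group M] [Group N] {f : M → N}
    {σ : MulAut M} {τ : MulAut N} (h : Function.Semiconj f σ τ) (n : ℤ) :
    Function.Semiconj f ⇑(σ ^ n) ⇑(τ ^ n) := by
  induction n using Int.induction_on with
  | zero => exact Function.Semiconj.id_right
  | succ n ih => rw [zpow_add_one, zpow_add_one]; exact ih.comp_right h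
  | pred n ih =>
    rw [zpow_sub_one, zpow_sub_one]
    exact ih.comp_right (h.inverses_right σ.apply_symm_apply τ.symm_apply_apply)

theorem Int.index_zpowers (r : Multiplicative ℤ) :
    (Subgroup.zpowers r).index = r.toAdd.natAbs := by
  rw [← Subgroup.index_toAddSubgroup, ← Int.index_zmultiples]
  rfl

namespace KleinBottleGroup
open SemidirectProduct

variable {G : Type*} [Group G]

def lift (x g : G) (h : g * x * g⁻¹ = x⁻¹) : KleinBottleGroup →* G :=
  SemidirectProduct.lift (zpowersHom G x) (zpowersHom G g) fun b => by
    have hconj : Function.Semiconj (zpowersHom G x) (MulEquiv.inv _) (MulAut.conj g) :=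
      fun y => by simp [zpow_neg, ← conj_zpow, h]
    ext
    simpa [map_zpow] using hconj.mulAut_zpow b.toAdd (.ofAdd 1)

@[simp] theorem lift_inl {x g : G} (h : g * x * g⁻¹ = x⁻¹) (a : Multiplicative ℤ) :
    lift x g h (inl a) = x ^ a.toAdd := SemidirectProduct.lift_inl ..

theorem map_inl_eq_one {A : Type*} [CommGroup A] [IsMulTorsionFree A]
    (ψ : KleinBottleGroup →* A) (a : Multiplicative ℤ) : ψ (inl a) = 1 := by
  have hinv : ψ (inl a⁻¹) = ψ (inl a) := by
    rw [show a⁻¹ = zpowersHom _ (MulEquiv.inv _) (.ofAdd 1) a by simp, inl_aut, map_mul, map_mul,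
      mul_right_comm, ← map_mul, ← map_mul inr, mul_inv_cancel, map_one, map_one, one_mul]
  rw [map_inv, map_inv] at hinv
  exact self_eq_inv.mp hinv.symm

theorem eq_one_of_map_eq_one {A : Type*} [CommGroup A] [IsMulTorsionFree A]
    (ψ : KleinBottleGroup →* A) {k : KleinBottleGroup} (hk : ψ k = 1) (hr : k.right ≠ 1) :
    ψ = 1 := by
  have hψr : ψ (inr k.right) = 1 := by
    rwa [← inl_left_mul_inr_right k, map_mul, map_inl_eq_one, one_mul] at hk
  have hgen : ψ (inr (.ofAdd 1)) = 1 := by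
    refine (IsMulTorsionFree.zpow_eq_one_iff_left (n := k.right.toAdd) (by simpa using hr)).mp ?_
    rw [← map_zpow, ← map_zpow, ← ofAdd_zsmul, smul_eq_mul, mul_one, ofAdd_toAdd, hψr]
  apply SemidirectProduct.hom_ext
  · ext; simp [map_inl_eq_one]
  · ext; simpa using hgen

theorem finiteIndex_range_inl_sup_zpowers {k : KleinBottleGroup} (hr : k.right ≠ 1) :
    ((inl : Multiplicative ℤ →* KleinBottleGroup).range ⊔ Subgroup.zpowers k).FiniteIndex := by
  let R := (Subgroup.zpowers k.right).comap (rightHom : KleinBottleGroup →* Multiplicative ℤ)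
  have : R.FiniteIndex := ⟨by
    rw [Subgroup.index_comap_of_surjective _ rightHom_surjective, Int.index_zpowers]
    simpa using hr⟩
  suffices hle : R ≤ (inl : Multiplicative ℤ →* KleinBottleGroup).range ⊔ Subgroup.zpowers k from
    Subgroup.finiteIndex_of_le hle
  intro m hm
  obtain ⟨n, hn⟩ := Subgroup.mem_zpowers_iff.mp hm
  have hm' : m * (k ^ n)⁻¹ ∈ (inl : Multiplicative ℤ →* KleinBottleGroup).range := by
    rw [range_inl_eq_ker_rightHom, MonoidHom.mem_ker, map_mul, map_inv, map_zpow, ← hn]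
    exact mul_inv_cancel _
  simpa using Subgroup.mul_mem _ (Subgroup.mem_sup_left hm')
    (Subgroup.mem_sup_right (Subgroup.zpow_mem _ (Subgroup.mem_zpowers k) n))

theorem virtuallyCyclic_range (φ : KleinBottleGroup →* G) {k : KleinBottleGroup} (hk : φ k = 1)
    (hr : k.right ≠ 1) : VirtuallyCyclic φ.range := by
  let H := Subgroup.zpowers (φ.rangeRestrict (inl (.ofAdd 1)))
  have hle : (inl : Multiplicative ℤ →* KleinBottleGroup).range ⊔ Subgroup.zpowers k ≤
      H.comap φ.rangeRestrict := by
    refine sup_le ?_ ?_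
    · rintro _ ⟨a, rfl⟩
      exact ⟨a.toAdd, by simp [← map_zpow, ← ofAdd_zsmul]⟩
    · rw [Subgroup.zpowers_le, Subgroup.mem_comap, show φ.rangeRestrict k = 1 from Subtype.ext hk]
      exact H.one_mem
  have := finiteIndex_range_inl_sup_zpowers hr
  have := Subgroup.finiteIndex_of_le hle
  refine ⟨H, inferInstance, ⟨?_⟩⟩
  rw [← Subgroup.index_comap_of_surjective _ φ.rangeRestrict_surjective]
  exact Subgroup.FiniteIndex.index_ne_zero

end KleinBottleGroup

open SemidirectProduct in
theorem conj_ne_inv_of_isTypeI {G : Type*} [Group G]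
    (htypeI : ∀ V : Subgroup G, Infinite ↥V → VirtuallyCyclic ↥V → IsTypeI ↥V)
    (hklein : ¬ ∃ f : KleinBottleGroup →* G, Function.Injective f) {x g : G}
    (hx : ¬IsOfFinOrder x) : g * x * g⁻¹ ≠ x⁻¹ := by
  intro h
  set φ := KleinBottleGroup.lift x g h
  have hinl : Function.Injective (φ.comp inl) := fun a b hab => by
    have : x ^ a.toAdd = x ^ b.toAdd := by simpa [φ] using hab
    exact Multiplicative.toAdd.injective (injective_zpow_iff_not_isOfFinOrder.mpr hx this)
  obtain ⟨k, hk, hk1⟩ : ∃ k, φ k = 1 ∧ k ≠ 1 := by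
    by_contra! hφ
    exact hklein ⟨φ, (injective_iff_map_eq_one φ).mpr hφ⟩
  have hr : k.right ≠ 1 := by
    intro hr
    rw [← inl_left_mul_inr_right k, hr, map_one, mul_one] at hk hk1
    exact hk1 (by rw [hinl (hk.trans (map_one _).symm), map_one])
  have hinf : Infinite φ.range :=
    .of_injective (φ.rangeRestrict.comp inl) (Function.Injective.of_comp (f := Subtype.val) hinl)
  obtain ⟨ψ, hψ⟩ := htypeI φ.range hinf (KleinBottleGroup.virtuallyCyclic_range φ hk hr)
  have hψk : ψ.comp φ.rangeRestrict k = 1 := by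
    rw [MonoidHom.comp_apply, show φ.rangeRestrict k = 1 from Subtype.ext hk, map_one]
  have hψ1 := KleinBottleGroup.eq_one_of_map_eq_one _ hψk hr
  obtain ⟨y, hy⟩ := (hψ.comp φ.rangeRestrict_surjective) (.ofAdd 1)
  rw [← MonoidHom.coe_comp, hψ1, MonoidHom.one_apply] at hy
  exact absurd (congrArg Multiplicative.toAdd hy) zero_ne_one

theorem conj_eq_or_eq_inv {G : Type*} [Group G] {x g : G} (hx : ¬IsOfFinOrder x)
    (hg : g ∈ Subgroup.normalizer (Subgroup.zpowers x : Set G)) :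
    g * x * g⁻¹ = x ∨ g * x * g⁻¹ = x⁻¹ := by
  have hmap := Subgroup.mem_normalizer_iff_map_conj_eq.mp hg
  rw [MonoidHom.map_zpowers, eq_comm, Subgroup.zpowers_eq_zpowers_iff hx] at hmap
  simpa only [eq_comm, MonoidHom.coe_coe, MulAut.conj_apply] using hmap

/-- If all infinite virtually cyclic subgroups of `G` are of type I and the Klein bottle
group is not isomorphic to a subgroup of `G`, then for every infinite cyclic subgroup
`C ≤ G`, conjugation by any element of the normalizer of `C` induces the identity on `C`. -/
theorem conj_id_on_infinite_cyclic (G : Type*) [Group G]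
    (h1 : ∀ V : Subgroup G, Infinite ↥V → VirtuallyCyclic ↥V → IsTypeI ↥V)
    (h2 : ¬ ∃ f : KleinBottleGroup →* G, Function.Injective f) :
    ∀ C : Subgroup G, IsCyclic ↥C → Infinite ↥C →
      ∀ g ∈ Subgroup.normalizer (C : Set G), ∀ c ∈ C, g * c * g⁻¹ = c := by
  intro C hC hCinf g hg c hc
  obtain ⟨x, rfl⟩ := (Subgroup.isCyclic_iff_exists_zpowers_eq_top C).mp hC
  have hx : ¬IsOfFinOrder x := infinite_zpowers.mp (Set.infinite_coe_iff.mp hCinf)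
  have hgx : g * x * g⁻¹ = x :=
    (conj_eq_or_eq_inv hx hg).resolve_right (conj_ne_inv_of_isTypeI h1 h2 hx)
  obtain ⟨n, rfl⟩ := Subgroup.mem_zpowers_iff.mp hc
  rw [← conj_zpow, hgx]
end

section
/- Let V be an infinite virtually cyclic group of type II. Then there exist a subgroup W of V of index 2 that is an infinite virtually cyclic group of type I, and an element x ∈ V with xWx⁻¹ = W such that conjugation by x induces the inversion automorphism on the infinite cyclic group W/K_W. -/
section VirtuallyCyclic

variable {G M : Type*} [Group G] [Group M]

theorem VirtuallyCyclic.subgroup (hG : VirtuallyCyclic G) (W : Subgroup G) :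
    VirtuallyCyclic W := by
  obtain ⟨H, hH, hHfin⟩ := hG
  exact ⟨H.subgroupOf W, isCyclic_of_injective (W.subtype.subgroupComap H)
    fun a b hab => Subtype.ext (Subtype.ext (congrArg (fun x : H => (x : G)) hab)), inferInstance⟩

theorem MonoidHom.le_ker_of_finite [IsMulTorsionFree M] (φ : G →* M) (L : Subgroup G)
    [Finite L] : L ≤ φ.ker := fun l hl =>
  (φ.isOfFinOrder (Submonoid.isOfFinOrder_coe.mpr (isOfFinOrder_of_finite (⟨l, hl⟩ : L)))).eq_one'

theorem VirtuallyCyclic.finite_ker_s16 [IsMulTorsionFree M] [Infinite M] (hG : VirtuallyCyclic G)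
    {φ : G →* M} (hφ : Function.Surjective φ) : Finite φ.ker := by
  obtain ⟨H, hH, hHfin⟩ := hG
  obtain ⟨g, rfl⟩ := (H.isCyclic_iff_exists_zpowers_eq_top).mp hH
  have hφg : φ g ≠ 1 := by
    intro h1
    have := Subgroup.finiteIndex_of_le (Subgroup.zpowers_le.mpr (φ.mem_ker.mpr h1))
    apply φ.ker.index_ne_zero_of_finite
    rw [Subgroup.index_ker, φ.range_eq_top.mpr hφ, Subgroup.card_top, Nat.card_eq_zero_of_infinite]
  have hdisj : Disjoint (Subgroup.zpowers g) φ.ker := by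
    rw [Subgroup.disjoint_def]
    rintro _ ⟨n, rfl⟩ hk
    rw [φ.mem_ker, map_zpow, IsMulTorsionFree.zpow_eq_one_iff_right hφg] at hk
    simp [hk]
  have hcard : ((Subgroup.zpowers g).subgroupOf φ.ker).index = Nat.card φ.ker := by
    rw [Subgroup.subgroupOf_eq_bot.mpr hdisj, Subgroup.index_bot]
  exact Nat.finite_of_card_ne_zero (hcard ▸ Subgroup.FiniteIndex.index_ne_zero)

end VirtuallyCyclic

namespace DihedralGroup

variable {n : ℕ}

@[simps]
def rotationHom : Multiplicative (ZMod n) →* DihedralGroup n where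
  toFun i := r i.toAdd
  map_one' := rfl
  map_mul' _ _ := rfl

theorem rotationHom_injective : Function.Injective (rotationHom (n := n)) :=
  fun _ _ h => r.inj h

variable (n) in
def rotations : Subgroup (DihedralGroup n) :=
  (rotationHom (n := n)).range

@[simp]
theorem r_mem_rotations (i : ZMod n) : r i ∈ rotations n :=
  ⟨.ofAdd i, rfl⟩

@[simp]
theorem sr_notMem_rotations (i : ZMod n) : sr i ∉ rotations n := by
  rintro ⟨j, ⟨⟩⟩

theorem index_rotations : (rotations n).index = 2 :=
  Subgroup.index_eq_two_iff.mpr ⟨sr 0, by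
    rintro (i | i) <;> simp only [r_mul_sr, sr_mul_sr, r_mem_rotations, sr_notMem_rotations] <;>
      decide⟩

theorem sr_mul_r_mul_sr (i j : ZMod n) : sr i * r j * sr i = r (-j) := by
  simp [sr_mul_r, sr_mul_sr]

variable {V : Type*} [Group V] (f : V →* DihedralGroup n)

noncomputable def rotationIndex : (rotations n).comap f →* Multiplicative (ZMod n) :=
  (MonoidHom.ofInjective rotationHom_injective).symm.toMonoidHom.comp (f.subgroupComap _)

theorem rotationHom_rotationIndex (w : (rotations n).comap f) :
    rotationHom (rotationIndex f w) = f w :=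
  congrArg Subtype.val ((MonoidHom.ofInjective rotationHom_injective).apply_symm_apply _)

variable {f}

theorem rotationIndex_surjective (hf : Function.Surjective f) :
    Function.Surjective (rotationIndex f) := by
  rw [rotationIndex, MonoidHom.coe_comp]
  exact (MulEquiv.surjective _).comp (f.subgroupComap_surjective_of_surjective _ hf)

theorem rotationIndex_conj {x : V} {i : ZMod n} (hx : f x = sr i)
    (w : (rotations n).comap f) (hw : x * w * x⁻¹ ∈ (rotations n).comap f) :
    rotationIndex f ⟨x * w * x⁻¹, hw⟩ = (rotationIndex f w)⁻¹ := by
  apply rotationHom_injective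
  obtain ⟨j, hj⟩ := w.2
  rw [rotationHom_rotationIndex, map_inv, rotationHom_rotationIndex, Subgroup.coe_mk, map_mul,
    map_mul, map_inv, hx, inv_sr, ← hj, rotationHom_apply, sr_mul_r_mul_sr, inv_r]

end DihedralGroup

open DihedralGroup in
theorem typeII_contains_oriented_reversing_typeI_subgroup_general (V : Type*) [Group V]
    (hV : VirtuallyCyclic V) (hII : IsTypeII V) :
    ∃ W : Subgroup V, W.index = 2 ∧ Infinite ↥W ∧ VirtuallyCyclic ↥W ∧ IsTypeI ↥W ∧
      ∃ KW : Subgroup ↥W, KW.Normal ∧ Finite KW ∧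
        (∀ L : Subgroup ↥W, L.Normal → Finite L → L ≤ KW) ∧
        ∃ x : V, ∃ hx : ∀ v : V, v ∈ W ↔ x * v * x⁻¹ ∈ W,
          ∀ w : ↥W, (QuotientGroup.mk (⟨x * ↑w * x⁻¹, (hx ↑w).mp w.2⟩ : ↥W) : ↥W ⧸ KW) =
            QuotientGroup.mk w⁻¹ := by
  obtain ⟨f, hf⟩ := hII
  obtain ⟨x, hx⟩ := hf (sr 0)
  have hindex : ((rotations 0).comap f).index = 2 :=
    (Subgroup.index_comap_of_surjective _ hf).trans index_rotations
  have hnormal := Subgroup.normal_of_index_eq_two hindex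
  have hφ := rotationIndex_surjective hf
  refine ⟨_, hindex, Infinite.of_surjective _ hφ, hV.subgroup _, ⟨_, hφ⟩, (rotationIndex f).ker,
    inferInstance, (hV.subgroup _).finite_ker_s16 hφ, fun L _ _ => (rotationIndex f).le_ker_of_finite L,
    x, fun v => by rw [hnormal.mem_comm_iff, inv_mul_cancel_left], fun w => ?_⟩
  rw [QuotientGroup.eq, ← MonoidHom.eq_iff, map_inv, rotationIndex_conj hx]

/-- An infinite virtually cyclic group `V` of type II contains an index-2 subgroup `W` which
is infinite virtually cyclic of type I, and an element `x ∈ V` with `xWx⁻¹ = W` such that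
conjugation by `x` induces the inversion automorphism on the infinite cyclic group `W/K_W`. -/
theorem typeII_contains_oriented_reversing_typeI_subgroup (V : Type*) [Group V] [Infinite V]
    (hV : VirtuallyCyclic V) (hII : IsTypeII V) :
    ∃ W : Subgroup V, W.index = 2 ∧ Infinite ↥W ∧ VirtuallyCyclic ↥W ∧ IsTypeI ↥W ∧
      ∃ KW : Subgroup ↥W, KW.Normal ∧ Finite KW ∧
        (∀ L : Subgroup ↥W, L.Normal → Finite L → L ≤ KW) ∧
        ∃ x : V, ∃ hx : ∀ v : V, v ∈ W ↔ x * v * x⁻¹ ∈ W,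
          ∀ w : ↥W, (QuotientGroup.mk (⟨x * ↑w * x⁻¹, (hx ↑w).mp w.2⟩ : ↥W) : ↥W ⧸ KW) =
            QuotientGroup.mk w⁻¹ :=
  typeII_contains_oriented_reversing_typeI_subgroup_general V hV hII
end
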